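/- arXiv:0908.1674 — 4 statements merged into one kernel-verified Lean document; each statement's English description precedes it below -/
import Mathlib

section
/- Let Y : ℂ^d ⊗ ℂ^d → ℂ^d ⊗ ℂ^d be an invertible linear map that sends every product vector (i.e., vector of the form x ⊗ y) to a product vector. Then either Y = Y₁ ⊗ Y₂ for invertible linear maps Y₁, Y₂ on ℂ^d, or Y = P∘(Y₁ ⊗ Y₂) where P is the swap (flip) operator exchanging the two tensor factors. -/
open TensorProduct

variable {V : Type*} [AddCommGroup V] [Module ℂ V]

/-- dual functional hitting 1 on a. -/
lemma dual_one {a : V} (ha : a ≠ 0) : ∃ f : V →ₗ[ℂ] ℂ, f a = 1 := by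
  have hx : a ∉ (⊥ : Submodule ℂ V) := by simpa using ha
  obtain ⟨f, hf, -⟩ := Submodule.exists_dual_map_eq_bot_of_notMem hx inferInstance
  exact ⟨(f a)⁻¹ • f, by simp [inv_mul_cancel₀ hf]⟩

lemma dual_pair {a c : V} (h : a ∉ Submodule.span ℂ {c}) :
    ∃ f : V →ₗ[ℂ] ℂ, f a = 1 ∧ f c = 0 := by
  obtain ⟨f, hf, hbot⟩ := Submodule.exists_dual_map_eq_bot_of_notMem h inferInstance
  have hc : f c = 0 := by
    have : f c ∈ (Submodule.span ℂ {c}).map f := ⟨c, Submodule.mem_span_singleton_self c, rfl⟩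
    rw [hbot] at this; simpa using this
  exact ⟨(f a)⁻¹ • f, by simp [inv_mul_cancel₀ hf], by simp [hc]⟩

/-- contraction on the left: f ⊗ id -/
noncomputable def ctL (f : V →ₗ[ℂ] ℂ) : TensorProduct ℂ V V →ₗ[ℂ] V :=
  TensorProduct.lift ((LinearMap.lsmul ℂ V).comp f)

@[simp] lemma ctL_tmul (f : V →ₗ[ℂ] ℂ) (x y : V) : ctL f (x ⊗ₜ y) = f x • y := rfl

noncomputable def ctR (f : V →ₗ[ℂ] ℂ) : TensorProduct ℂ V V →ₗ[ℂ] V :=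
  (ctL f).comp (TensorProduct.comm ℂ V V).toLinearMap

@[simp] lemma ctR_tmul (f : V →ₗ[ℂ] ℂ) (x y : V) : ctR f (x ⊗ₜ y) = f y • x := rfl

lemma tmul_eq_zero {x y : V} (h : x ⊗ₜ[ℂ] y = 0) : x = 0 ∨ y = 0 := by
  by_cases hx : x = 0
  · exact Or.inl hx
  · obtain ⟨f, hf⟩ := dual_one hx
    right
    have := congrArg (ctL f) h
    simpa [hf] using this

lemma nonpar_symm {a c : V} (hc : c ≠ 0) (h : a ∉ Submodule.span ℂ {c}) :
    c ∉ Submodule.span ℂ {a} := by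
  intro hmem
  obtain ⟨t, ht⟩ := Submodule.mem_span_singleton.mp hmem
  have htne : t ≠ 0 := by rintro rfl; simp at ht; exact hc ht.symm
  exact h (Submodule.mem_span_singleton.mpr ⟨t⁻¹, by rw [← ht, smul_smul, inv_mul_cancel₀ htne, one_smul]⟩)

/-- equal nonzero pure tensors have proportional factors -/
lemma pure_eq {a b c e : V} (h : a ⊗ₜ[ℂ] b = c ⊗ₜ[ℂ] e) (hne : a ⊗ₜ[ℂ] b ≠ 0) :
    ∃ μ : ℂ, μ ≠ 0 ∧ c = μ • a ∧ b = μ • e := by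
  have ha : a ≠ 0 := fun h0 => hne (by simp [h0])
  have hb : b ≠ 0 := fun h0 => hne (by simp [h0])
  have he : e ≠ 0 := by
    rintro rfl; rw [tmul_zero] at h; exact hne h
  obtain ⟨f, hf⟩ := dual_one ha
  have hμ : b = f c • e := by
    have := congrArg (ctL f) h; simpa [hf] using this
  have hμne : f c ≠ 0 := fun h0 => hb (by rw [hμ, h0, zero_smul])
  refine ⟨f c, hμne, ?_, hμ⟩
  have : (f c • a - c) ⊗ₜ[ℂ] e = 0 := by
    rw [sub_tmul, smul_tmul, ← hμ, h, sub_self]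
  rcases tmul_eq_zero this with h1 | h1
  · rw [sub_eq_zero] at h1; exact h1.symm
  · exact absurd h1 he

/-- sum of two pure tensors with non-parallel left factors being pure forces
right factors parallel to a common vector -/
lemma sum_pure {a b c e u w : V} (h : a ⊗ₜ[ℂ] b + c ⊗ₜ[ℂ] e = u ⊗ₜ[ℂ] w)
    (hc : c ≠ 0) (hnp : a ∉ Submodule.span ℂ {c}) :
    ∃ β γ : ℂ, b = β • w ∧ e = γ • w := by
  obtain ⟨f, hf1, hf2⟩ := dual_pair hnp
  obtain ⟨g, hg1, hg2⟩ := dual_pair (nonpar_symm hc hnp)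
  have h1 := congrArg (ctL f) h
  have h2 := congrArg (ctL g) h
  simp [hf1, hf2, hg1, hg2] at h1 h2
  exact ⟨f u, g u, h1, h2⟩

lemma coeff_zero {u u' : V} (hu' : u' ≠ 0) (hnp : u ∉ Submodule.span ℂ {u'})
    {c₁ c₂ : ℂ} (h : c₁ • u + c₂ • u' = 0) : c₁ = 0 ∧ c₂ = 0 := by
  obtain ⟨f, hf1, hf2⟩ := dual_pair hnp
  have h1 := congrArg f h
  simp [hf1, hf2] at h1
  subst h1
  simp at h
  rcases h with h | h
  · exact ⟨rfl, h⟩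
  · exact absurd h hu'

lemma nz_tmul {x y : V} (hx : x ≠ 0) (hy : y ≠ 0) : x ⊗ₜ[ℂ] y ≠ 0 :=
  fun h => (tmul_eq_zero h).elim hx hy

section YY
variable (Y : TensorProduct ℂ V V ≃ₗ[ℂ] TensorProduct ℂ V V)

/-- slice x ⊗ V maps into a ⊗ V -/
def Ltype (x : V) : Prop := ∃ a : V, a ≠ 0 ∧ ∀ v : V, ∃ p, Y (x ⊗ₜ v) = a ⊗ₜ p
/-- slice x ⊗ V maps into V ⊗ b -/
def Rtype (x : V) : Prop := ∃ b : V, b ≠ 0 ∧ ∀ v : V, ∃ p, Y (x ⊗ₜ v) = p ⊗ₜ b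

variable (hY : ∀ x y : V, ∃ a b : V, Y (x ⊗ₜ y) = a ⊗ₜ b)

include hY in
lemma slice_LR {x : V} (hx : x ≠ 0) (v0 : V) (hv0 : v0 ≠ 0) :
    Ltype Y x ∨ Rtype Y x := by
  classical
  set A : V → V := fun v => (hY x v).choose with hA
  set B : V → V := fun v => (hY x v).choose_spec.choose with hB
  have hAB : ∀ v, Y (x ⊗ₜ v) = A v ⊗ₜ B v := fun v => (hY x v).choose_spec.choose_spec
  have hnz : ∀ v : V, v ≠ 0 → A v ≠ 0 ∧ B v ≠ 0 := by
    intro v hv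
    have h1 : Y (x ⊗ₜ v) ≠ 0 := by
      rw [Ne, LinearEquiv.map_eq_zero_iff]; exact nz_tmul hx hv
    rw [hAB] at h1
    constructor
    · rintro h0; rw [h0, zero_tmul] at h1; exact h1 rfl
    · rintro h0; rw [h0, tmul_zero] at h1; exact h1 rfl
  have pairwise : ∀ v w : V, v ≠ 0 → w ≠ 0 →
      A w ∈ Submodule.span ℂ {A v} ∨ B w ∈ Submodule.span ℂ {B v} := by
    intro v w hv hw
    by_cases hAA : A w ∈ Submodule.span ℂ {A v}
    · exact Or.inl hAA
    · right
      obtain ⟨u, ww, huw⟩ := hY x (v + w)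
      have hsum : A v ⊗ₜ[ℂ] B v + A w ⊗ₜ[ℂ] B w = u ⊗ₜ[ℂ] ww := by
        rw [← hAB, ← hAB, ← map_add, ← tmul_add, huw]
      have hAvnp : A v ∉ Submodule.span ℂ {A w} :=
        nonpar_symm (hnz v hv).1 hAA
      obtain ⟨β, γ, hβ, hγ⟩ := sum_pure hsum (hnz w hw).1 hAvnp
      have hβne : β ≠ 0 := by
        rintro rfl; rw [zero_smul] at hβ; exact (hnz v hv).2 hβ
      refine Submodule.mem_span_singleton.mpr ⟨γ * β⁻¹, ?_⟩
      rw [hγ, hβ, smul_smul, mul_assoc, inv_mul_cancel₀ hβne, mul_one]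
  by_cases hBB : ∀ v w : V, v ≠ 0 → w ≠ 0 → B w ∈ Submodule.span ℂ {B v}
  · right
    refine ⟨B v0, (hnz v0 hv0).2, fun v => ?_⟩
    by_cases hv : v = 0
    · exact ⟨0, by rw [hv, tmul_zero, map_zero, zero_tmul]⟩
    · obtain ⟨t, ht⟩ := Submodule.mem_span_singleton.mp (hBB v0 v hv0 hv)
      exact ⟨t • A v, by rw [hAB, ← ht, smul_tmul, tmul_smul]⟩
  · left
    push_neg at hBB
    obtain ⟨v, w, hv, hw, hBvw⟩ := hBB
    refine ⟨A v, (hnz v hv).1, fun u => ?_⟩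
    by_cases hu : u = 0
    · exact ⟨0, by rw [hu, tmul_zero, map_zero, tmul_zero]⟩
    · have hAu : A u ∈ Submodule.span ℂ {A v} := by
        rcases pairwise v u hv hu with h1 | h1
        · exact h1
        · rcases pairwise w u hw hu with h2 | h2
          · have hAwv : A w ∈ Submodule.span ℂ {A v} := by
              rcases pairwise v w hv hw with h3 | h3
              · exact h3
              · exact absurd h3 hBvw
            obtain ⟨r, hr⟩ := Submodule.mem_span_singleton.mp h2
            obtain ⟨q, hq⟩ := Submodule.mem_span_singleton.mp hAwv
            exact Submodule.mem_span_singleton.mpr ⟨r * q, by rw [← hr, ← hq, smul_smul]⟩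
          · exfalso
            obtain ⟨s, hs⟩ := Submodule.mem_span_singleton.mp h1
            obtain ⟨t, ht⟩ := Submodule.mem_span_singleton.mp h2
            have ht0 : t ≠ 0 := by rintro rfl; rw [zero_smul] at ht; exact (hnz u hu).2 ht.symm
            refine hBvw (Submodule.mem_span_singleton.mpr ⟨t⁻¹ * s, ?_⟩)
            rw [mul_smul, hs, ← ht, smul_smul, inv_mul_cancel₀ ht0, one_smul]
      obtain ⟨r, hr⟩ := Submodule.mem_span_singleton.mp hAu
      exact ⟨r • B u, by rw [hAB, ← hr, smul_tmul, tmul_smul]⟩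
end YY

section YY2
variable (Y : TensorProduct ℂ V V ≃ₗ[ℂ] TensorProduct ℂ V V)

lemma Lmap {x a : V} (hx : x ≠ 0) (ha : a ≠ 0)
    (h : ∀ v : V, ∃ p, Y (x ⊗ₜ v) = a ⊗ₜ p) :
    ∃ P : V →ₗ[ℂ] V, Function.Injective P ∧ ∀ v, Y (x ⊗ₜ v) = a ⊗ₜ P v := by
  obtain ⟨f, hf⟩ := dual_one ha
  refine ⟨(ctL f) ∘ₗ (Y.toLinearMap ∘ₗ TensorProduct.mk ℂ V V x), ?_, ?_⟩
  · rw [← LinearMap.ker_eq_bot, Submodule.eq_bot_iff]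
    intro v hv
    simp only [LinearMap.mem_ker, LinearMap.comp_apply, TensorProduct.mk_apply,
      LinearEquiv.coe_coe] at hv
    obtain ⟨p, hp⟩ := h v
    rw [hp] at hv
    simp only [ctL_tmul, hf, one_smul] at hv
    subst hv
    rw [tmul_zero] at hp
    have : x ⊗ₜ[ℂ] v = 0 := by
      rw [← LinearEquiv.map_eq_zero_iff Y]; exact hp
    rcases tmul_eq_zero this with h1 | h1
    · exact absurd h1 hx
    · exact h1
  · intro v
    obtain ⟨p, hp⟩ := h v
    simp only [LinearMap.comp_apply, TensorProduct.mk_apply, LinearEquiv.coe_coe, hp,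
      ctL_tmul, hf, one_smul]

lemma Rmap {x b : V} (hx : x ≠ 0) (hb : b ≠ 0)
    (h : ∀ v : V, ∃ p, Y (x ⊗ₜ v) = p ⊗ₜ b) :
    ∃ Q : V →ₗ[ℂ] V, Function.Injective Q ∧ ∀ v, Y (x ⊗ₜ v) = Q v ⊗ₜ b := by
  obtain ⟨f, hf⟩ := dual_one hb
  refine ⟨(ctR f) ∘ₗ (Y.toLinearMap ∘ₗ TensorProduct.mk ℂ V V x), ?_, ?_⟩
  · rw [← LinearMap.ker_eq_bot, Submodule.eq_bot_iff]
    intro v hv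
    simp only [LinearMap.mem_ker, LinearMap.comp_apply, TensorProduct.mk_apply,
      LinearEquiv.coe_coe] at hv
    obtain ⟨p, hp⟩ := h v
    rw [hp] at hv
    simp only [ctR_tmul, hf, one_smul] at hv
    subst hv
    rw [zero_tmul] at hp
    have : x ⊗ₜ[ℂ] v = 0 := by
      rw [← LinearEquiv.map_eq_zero_iff Y]; exact hp
    rcases tmul_eq_zero this with h1 | h1
    · exact absurd h1 hx
    · exact h1
  · intro v
    obtain ⟨p, hp⟩ := h v
    simp only [LinearMap.comp_apply, TensorProduct.mk_apply, LinearEquiv.coe_coe, hp,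
      ctR_tmul, hf, one_smul]

end YY2

lemma inj_nonpar {P : V →ₗ[ℂ] V} (hP : Function.Injective P) {v1 v2 : V}
    (h : v1 ∉ Submodule.span ℂ {v2}) : P v1 ∉ Submodule.span ℂ {P v2} := by
  intro hmem
  obtain ⟨t, ht⟩ := Submodule.mem_span_singleton.mp hmem
  rw [← map_smul] at ht
  exact h (Submodule.mem_span_singleton.mpr ⟨t, hP ht⟩)

lemma cover_span {U1 U2 : Submodule ℂ V} (h : ∀ v, v ∈ U1 ∨ v ∈ U2) :
    (∀ v, v ∈ U1) ∨ (∀ v, v ∈ U2) := by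
  by_contra hc
  push_neg at hc
  obtain ⟨⟨w1, hw1⟩, ⟨w2, hw2⟩⟩ := hc
  have h1 : w1 ∈ U2 := (h w1).resolve_left hw1
  have h2 : w2 ∈ U1 := (h w2).resolve_right hw2
  rcases h (w1 + w2) with h3 | h3
  · exact hw1 (by simpa using U1.sub_mem h3 h2)
  · exact hw2 (by simpa using U2.sub_mem h3 h1)

lemma range_not_in_span {P : V →ₗ[ℂ] V} (hP : Function.Injective P) {v1 v2 : V}
    (hv2 : v2 ≠ 0) (hnp : v1 ∉ Submodule.span ℂ {v2}) {b : V}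
    (h : ∀ v, P v ∈ Submodule.span ℂ {b}) : False := by
  obtain ⟨s, hs⟩ := Submodule.mem_span_singleton.mp (h v1)
  obtain ⟨t, ht⟩ := Submodule.mem_span_singleton.mp (h v2)
  have ht0 : t ≠ 0 := by
    rintro rfl
    rw [zero_smul] at ht
    exact hv2 (hP (by rw [← ht, map_zero]))
  exact inj_nonpar hP hnp (Submodule.mem_span_singleton.mpr
    ⟨s * t⁻¹, by rw [← hs, ← ht, smul_smul, mul_assoc, inv_mul_cancel₀ ht0, mul_one]⟩)

section YY3
variable (Y : TensorProduct ℂ V V ≃ₗ[ℂ] TensorProduct ℂ V V)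
variable {v1 v2 : V} (hv2 : v2 ≠ 0) (hnp12 : v1 ∉ Submodule.span ℂ {v2})

include hnp12 in
lemma nz_of_nonpar : v1 ≠ 0 := by
  rintro rfl; exact hnp12 (Submodule.zero_mem _)

include hv2 hnp12 in
lemma notboth {x : V} (hx : x ≠ 0) : ¬ (Ltype Y x ∧ Rtype Y x) := by
  rintro ⟨⟨a, ha, hL⟩, ⟨b, hb, hR⟩⟩
  obtain ⟨P, hPinj, hP⟩ := Lmap Y hx ha hL
  obtain ⟨Q, hQinj, hQ⟩ := Rmap Y hx hb hR
  have key : ∀ v : V, v ≠ 0 → Q v ∈ Submodule.span ℂ {a} := by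
    intro v hv
    have heq : a ⊗ₜ[ℂ] P v = Q v ⊗ₜ[ℂ] b := by rw [← hP, ← hQ]
    have hne : a ⊗ₜ[ℂ] P v ≠ 0 := by
      rw [← hP, Ne, LinearEquiv.map_eq_zero_iff]
      exact nz_tmul hx hv
    obtain ⟨μ, hμ, hc, -⟩ := pure_eq heq hne
    exact Submodule.mem_span_singleton.mpr ⟨μ, hc.symm⟩
  exact range_not_in_span hQinj hv2 hnp12
    (fun v => by
      by_cases hv : v = 0
      · rw [hv, map_zero]; exact Submodule.zero_mem _
      · exact key v hv)

variable (hY : ∀ x y : V, ∃ a b : V, Y (x ⊗ₜ y) = a ⊗ₜ b)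

include hv2 hnp12 hY in
lemma sametype {x0 x1 : V} (hx0 : x0 ≠ 0) (hx1 : x1 ≠ 0) (hL0 : Ltype Y x0) :
    Ltype Y x1 := by
  rcases slice_LR Y hY hx1 v2 hv2 with h | hR
  · exact h
  exfalso
  obtain ⟨b, hb, hRb⟩ := hR
  by_cases hpar : x1 ∈ Submodule.span ℂ {x0}
  · -- then Rtype x0, contradiction with notboth
    obtain ⟨t, ht⟩ := Submodule.mem_span_singleton.mp hpar
    have ht0 : t ≠ 0 := by rintro rfl; rw [zero_smul] at ht; exact hx1 ht.symm
    have hR0 : Rtype Y x0 := by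
      refine ⟨b, hb, fun v => ?_⟩
      obtain ⟨p, hp⟩ := hRb v
      refine ⟨t⁻¹ • p, ?_⟩
      have : Y (x0 ⊗ₜ[ℂ] v) = t⁻¹ • Y (x1 ⊗ₜ[ℂ] v) := by
        rw [← map_smul, ← ht, smul_tmul', smul_smul, inv_mul_cancel₀ ht0, one_smul]
      rw [this, hp, smul_tmul']
    exact notboth Y hv2 hnp12 hx0 ⟨hL0, hR0⟩
  · obtain ⟨a, ha, hLa⟩ := hL0
    obtain ⟨P, hPinj, hP⟩ := Lmap Y hx0 ha hLa
    obtain ⟨Q, hQinj, hQ⟩ := Rmap Y hx1 hb hRb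
    have key : ∀ v : V, Q v ∈ Submodule.span ℂ {a} ∨ P v ∈ Submodule.span ℂ {b} := by
      intro v
      by_cases hv : v = 0
      · left; rw [hv, map_zero]; exact Submodule.zero_mem _
      by_cases hQa : Q v ∈ Submodule.span ℂ {a}
      · exact Or.inl hQa
      right
      obtain ⟨u, w, huw⟩ := hY (x0 + x1) v
      have hsum : a ⊗ₜ[ℂ] P v + Q v ⊗ₜ[ℂ] b = u ⊗ₜ[ℂ] w := by
        rw [← hP, ← hQ, ← map_add, ← add_tmul, huw]
      have hQv : Q v ≠ 0 := fun h0 => hv (hQinj (by rw [h0, map_zero]))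
      have hanp : a ∉ Submodule.span ℂ {Q v} := nonpar_symm ha hQa
      obtain ⟨β, γ, hβ, hγ⟩ := sum_pure hsum hQv hanp
      have hγ0 : γ ≠ 0 := by rintro rfl; rw [zero_smul] at hγ; exact hb hγ
      exact Submodule.mem_span_singleton.mpr
        ⟨β * γ⁻¹, by rw [hγ, hβ, smul_smul, mul_assoc, inv_mul_cancel₀ hγ0, mul_one]⟩
    rcases cover_span (fun v => by
        rcases key v with h | h
        · exact Or.inl (Submodule.mem_comap.mpr h)
        · exact Or.inr (Submodule.mem_comap.mpr h)) with hall | hall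
    · exact range_not_in_span hQinj hv2 hnp12 (fun v => Submodule.mem_comap.mp (hall v))
    · exact range_not_in_span hPinj hv2 hnp12 (fun v => Submodule.mem_comap.mp (hall v))

end YY3

section YY4
variable [FiniteDimensional ℂ V]
variable (Y : TensorProduct ℂ V V ≃ₗ[ℂ] TensorProduct ℂ V V)
variable {v1 v2 : V} (hv2 : v2 ≠ 0) (hnp12 : v1 ∉ Submodule.span ℂ {v2})
variable (hY : ∀ x y : V, ∃ a b : V, Y (x ⊗ₜ y) = a ⊗ₜ b)

/-- the transposed map -/
noncomputable def Yc : TensorProduct ℂ V V ≃ₗ[ℂ] TensorProduct ℂ V V :=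
  (TensorProduct.comm ℂ V V).trans Y

@[simp] lemma Yc_tmul (x y : V) : Yc Y (x ⊗ₜ y) = Y (y ⊗ₜ x) := rfl

include hv2 hnp12 hY in
/-- If all x-slices are of left type, all y-slices are of right type. -/
lemma yslice (hall : ∀ x : V, x ≠ 0 → Ltype Y x) {y : V} (hy : y ≠ 0) :
    Rtype (Yc Y) y := by
  have hv1 : v1 ≠ 0 := nz_of_nonpar hnp12
  have hYc : ∀ x y : V, ∃ a b : V, (Yc Y) (x ⊗ₜ y) = a ⊗ₜ b := fun x y => by
    rw [Yc_tmul]; exact hY y x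
  rcases slice_LR (Yc Y) hYc hy v2 hv2 with hL | hR
  · exfalso
    obtain ⟨a, ha, hLa⟩ := hL
    obtain ⟨P', hP'inj, hP'⟩ := Lmap (Yc Y) hy ha hLa
    -- x-slices at v2 and v1
    obtain ⟨a1, ha1, hL1⟩ := hall v2 hv2
    obtain ⟨a2, ha2, hL2⟩ := hall v1 hv1
    obtain ⟨P1, hP1inj, hP1⟩ := Lmap Y hv2 ha1 hL1
    obtain ⟨P2, hP2inj, hP2⟩ := Lmap Y hv1 ha2 hL2
    -- a2 not parallel to a1
    have hnpa : a2 ∉ Submodule.span ℂ {a1} := by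
      intro hmem
      obtain ⟨c, hc⟩ := Submodule.mem_span_singleton.mp hmem
      have hP1surj : Function.Surjective P1 :=
        (LinearMap.injective_iff_surjective).mp hP1inj
      obtain ⟨u1, hu1⟩ := hP1surj (-(c • P2 v2))
      have hzero : Y (v2 ⊗ₜ[ℂ] u1 + v1 ⊗ₜ[ℂ] v2) = 0 := by
        rw [map_add, hP1, hP2, hu1, ← hc]
        rw [show (c • a1) ⊗ₜ[ℂ] P2 v2 = a1 ⊗ₜ[ℂ] (c • P2 v2) by
          rw [smul_tmul]]
        rw [← tmul_add, neg_add_cancel, tmul_zero]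
      rw [LinearEquiv.map_eq_zero_iff] at hzero
      obtain ⟨g, hg1, hg2⟩ := dual_pair hnp12
      have h2 := congrArg (ctL g) hzero
      simp only [map_add, ctL_tmul, hg1, hg2, one_smul, zero_smul, add_zero, zero_add,
        map_zero] at h2
      exact hv2 h2
    -- derive a ∥ a1 and a ∥ a2
    have h1 : a1 ⊗ₜ[ℂ] P1 y = a ⊗ₜ[ℂ] P' v2 := by rw [← hP1, ← hP', Yc_tmul]
    have h2 : a2 ⊗ₜ[ℂ] P2 y = a ⊗ₜ[ℂ] P' v1 := by rw [← hP2, ← hP', Yc_tmul]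
    have h1ne : a1 ⊗ₜ[ℂ] P1 y ≠ 0 := by
      rw [← hP1, Ne, LinearEquiv.map_eq_zero_iff]; exact nz_tmul hv2 hy
    have h2ne : a2 ⊗ₜ[ℂ] P2 y ≠ 0 := by
      rw [← hP2, Ne, LinearEquiv.map_eq_zero_iff]; exact nz_tmul hv1 hy
    obtain ⟨μ, hμ0, hμ, -⟩ := pure_eq h1 h1ne
    obtain ⟨ν, hν0, hν, -⟩ := pure_eq h2 h2ne
    exact hnpa (Submodule.mem_span_singleton.mpr
      ⟨ν⁻¹ * μ, by rw [mul_smul, ← hμ, hν, smul_smul, inv_mul_cancel₀ hν0, one_smul]⟩)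
  · exact hR
end YY4

section YY5
variable [FiniteDimensional ℂ V]
variable (Y : TensorProduct ℂ V V ≃ₗ[ℂ] TensorProduct ℂ V V)
variable {v1 v2 : V} (hv2 : v2 ≠ 0) (hnp12 : v1 ∉ Submodule.span ℂ {v2})
variable (hY : ∀ x y : V, ∃ a b : V, Y (x ⊗ₜ y) = a ⊗ₜ b)

omit [FiniteDimensional ℂ V] in
lemma smul_tmul_cancel {z : TensorProduct ℂ V V} (hz : z ≠ 0) {c c' : ℂ}
    (h : c • z = c' • z) : c = c' := by
  by_contra hne
  have : (c - c') • z = 0 := by rw [sub_smul, h, sub_self]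
  rcases smul_eq_zero.mp this with h1 | h1
  · exact hne (sub_eq_zero.mp h1)
  · exact hz h1

include hv2 hnp12 hY in
lemma mainL (hall : ∀ x : V, x ≠ 0 → Ltype Y x) :
    ∃ Q P : V →ₗ[ℂ] V, Function.Injective Q ∧ Function.Injective P ∧
      ∀ x y : V, Y (x ⊗ₜ y) = Q x ⊗ₜ P y := by
  classical
  -- distinguished x-slice at v2
  obtain ⟨a0, ha0, hL0⟩ := hall v2 hv2
  obtain ⟨P, hPinj, hP⟩ := Lmap Y hv2 ha0 hL0
  -- distinguished y-slice at v2
  obtain ⟨b0, hb0, hR0⟩ := yslice Y hv2 hnp12 hY hall hv2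
  obtain ⟨Q, hQinj, hQ'⟩ := Rmap (Yc Y) hv2 hb0 hR0
  have hQ : ∀ u : V, Y (u ⊗ₜ v2) = Q u ⊗ₜ b0 := fun u => by rw [← Yc_tmul, hQ']
  -- existence of local scalar
  have exist : ∀ x y : V, x ≠ 0 → y ≠ 0 → ∃ c : ℂ, c ≠ 0 ∧
      Y (x ⊗ₜ y) = c • (Q x ⊗ₜ P y) := by
    intro x y hx hy
    obtain ⟨ax, hax, hLx⟩ := hall x hx
    obtain ⟨Px, hPxinj, hPx⟩ := Lmap Y hx hax hLx
    obtain ⟨by_, hby, hRy⟩ := yslice Y hv2 hnp12 hY hall hy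
    obtain ⟨Qy, hQyinj, hQy'⟩ := Rmap (Yc Y) hy hby hRy
    have hQy : ∀ u : V, Y (u ⊗ₜ y) = Qy u ⊗ₜ by_ := fun u => by rw [← Yc_tmul, hQy']
    have e1 : ax ⊗ₜ[ℂ] Px v2 = Q x ⊗ₜ[ℂ] b0 := by rw [← hPx, ← hQ]
    have e1ne : ax ⊗ₜ[ℂ] Px v2 ≠ 0 := by
      rw [← hPx, Ne, LinearEquiv.map_eq_zero_iff]; exact nz_tmul hx hv2
    obtain ⟨μ, hμ0, hμ1, -⟩ := pure_eq e1 e1ne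
    have e2 : a0 ⊗ₜ[ℂ] P y = Qy v2 ⊗ₜ[ℂ] by_ := by rw [← hP, ← hQy]
    have e2ne : a0 ⊗ₜ[ℂ] P y ≠ 0 := by
      rw [← hP, Ne, LinearEquiv.map_eq_zero_iff]; exact nz_tmul hv2 hy
    obtain ⟨ν, hν0, -, hν2⟩ := pure_eq e2 e2ne
    have e3 : ax ⊗ₜ[ℂ] Px y = Qy x ⊗ₜ[ℂ] by_ := by rw [← hPx, ← hQy]
    have e3ne : ax ⊗ₜ[ℂ] Px y ≠ 0 := by
      rw [← hPx, Ne, LinearEquiv.map_eq_zero_iff]; exact nz_tmul hx hy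
    obtain ⟨τ, hτ0, -, hτ2⟩ := pure_eq e3 e3ne
    refine ⟨μ⁻¹ * τ * ν⁻¹,
      mul_ne_zero (mul_ne_zero (inv_ne_zero hμ0) hτ0) (inv_ne_zero hν0), ?_⟩
    rw [hPx, hτ2, show ax = μ⁻¹ • Q x by rw [hμ1, smul_smul, inv_mul_cancel₀ hμ0, one_smul],
      show by_ = ν⁻¹ • P y by rw [hν2, smul_smul, inv_mul_cancel₀ hν0, one_smul]]
    simp only [smul_tmul', tmul_smul, smul_smul]
    congr 1
    ring_nf
  have hnzQP : ∀ x y : V, x ≠ 0 → y ≠ 0 → Q x ⊗ₜ[ℂ] P y ≠ 0 := by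
    intro x y hx hy
    exact nz_tmul (fun h => hx (hQinj (by rw [h, map_zero])))
      (fun h => hy (hPinj (by rw [h, map_zero])))
  -- the scalar does not depend on x
  have samec_x : ∀ x x' y : V, x ≠ 0 → x' ≠ 0 → y ≠ 0 → ∀ c c' : ℂ,
      Y (x ⊗ₜ y) = c • (Q x ⊗ₜ P y) → Y (x' ⊗ₜ y) = c' • (Q x' ⊗ₜ P y) → c = c' := by
    intro x x' y hx hx' hy c c' hc hc'
    by_cases hpar : x' ∈ Submodule.span ℂ {x}
    · obtain ⟨t, ht⟩ := Submodule.mem_span_singleton.mp hpar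
      have ht0 : t ≠ 0 := by rintro rfl; rw [zero_smul] at ht; exact hx' ht.symm
      have h2 : Y (x' ⊗ₜ[ℂ] y) = c • (Q x' ⊗ₜ[ℂ] P y) := by
        rw [← ht, ← smul_tmul', map_smul, hc, map_smul, ← smul_tmul', smul_comm,
          smul_tmul']
      exact smul_tmul_cancel (hnzQP x' y hx' hy) (h2.symm.trans hc')
    · have hxx' : x + x' ≠ 0 := by
        intro h0
        exact hpar (Submodule.mem_span_singleton.mpr
          ⟨-1, by rw [neg_smul, one_smul, neg_eq_iff_add_eq_zero]; exact h0⟩)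
      obtain ⟨c'', hc''0, hc''⟩ := exist (x + x') y hxx' hy
      have hsum : c'' • (Q x ⊗ₜ[ℂ] P y) + c'' • (Q x' ⊗ₜ[ℂ] P y)
          = c • (Q x ⊗ₜ[ℂ] P y) + c' • (Q x' ⊗ₜ[ℂ] P y) := by
        rw [← hc, ← hc', ← map_add, ← add_tmul]
        rw [← smul_add, ← add_tmul, ← map_add, ← hc'']
      have h0 : ((c'' - c) • Q x + (c'' - c') • Q x') ⊗ₜ[ℂ] P y = 0 := by
        rw [add_tmul, ← smul_tmul', ← smul_tmul', sub_smul, sub_smul,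
          sub_add_sub_comm, hsum, sub_self]
      have hPy : P y ≠ 0 := fun h => hy (hPinj (by rw [h, map_zero]))
      have hvec : (c'' - c) • Q x + (c'' - c') • Q x' = 0 :=
        (tmul_eq_zero h0).resolve_right hPy
      have hQx' : Q x' ≠ 0 := fun h => hx' (hQinj (by rw [h, map_zero]))
      have hQnp : Q x ∉ Submodule.span ℂ {Q x'} :=
        inj_nonpar hQinj (nonpar_symm hx hpar)
      obtain ⟨h1, h2⟩ := coeff_zero hQx' hQnp hvec
      rw [sub_eq_zero] at h1 h2
      rw [← h1, ← h2]
  -- the scalar does not depend on y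
  have samec_y : ∀ x y y' : V, x ≠ 0 → y ≠ 0 → y' ≠ 0 → ∀ c c' : ℂ,
      Y (x ⊗ₜ y) = c • (Q x ⊗ₜ P y) → Y (x ⊗ₜ y') = c' • (Q x ⊗ₜ P y') → c = c' := by
    intro x y y' hx hy hy' c c' hc hc'
    by_cases hpar : y' ∈ Submodule.span ℂ {y}
    · obtain ⟨t, ht⟩ := Submodule.mem_span_singleton.mp hpar
      have ht0 : t ≠ 0 := by rintro rfl; rw [zero_smul] at ht; exact hy' ht.symm
      have h2 : Y (x ⊗ₜ[ℂ] y') = c • (Q x ⊗ₜ[ℂ] P y') := by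
        rw [← ht, tmul_smul, map_smul, hc, map_smul, tmul_smul, smul_comm]
      exact smul_tmul_cancel (hnzQP x y' hx hy') (h2.symm.trans hc')
    · have hyy' : y + y' ≠ 0 := by
        intro h0
        exact hpar (Submodule.mem_span_singleton.mpr
          ⟨-1, by rw [neg_smul, one_smul, neg_eq_iff_add_eq_zero]; exact h0⟩)
      obtain ⟨c'', hc''0, hc''⟩ := exist x (y + y') hx hyy'
      have hsum : c'' • (Q x ⊗ₜ[ℂ] P y) + c'' • (Q x ⊗ₜ[ℂ] P y')
          = c • (Q x ⊗ₜ[ℂ] P y) + c' • (Q x ⊗ₜ[ℂ] P y') := by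
        rw [← hc, ← hc', ← map_add, ← tmul_add]
        rw [← smul_add, ← tmul_add, ← map_add, ← hc'']
      have h0 : Q x ⊗ₜ[ℂ] ((c'' - c) • P y + (c'' - c') • P y') = 0 := by
        rw [tmul_add, tmul_smul, tmul_smul, sub_smul, sub_smul,
          sub_add_sub_comm, hsum, sub_self]
      have hQx : Q x ≠ 0 := fun h => hx (hQinj (by rw [h, map_zero]))
      have hvec : (c'' - c) • P y + (c'' - c') • P y' = 0 :=
        (tmul_eq_zero h0).resolve_left hQx
      have hPy' : P y' ≠ 0 := fun h => hy' (hPinj (by rw [h, map_zero]))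
      have hPnp : P y ∉ Submodule.span ℂ {P y'} :=
        inj_nonpar hPinj (nonpar_symm hy hpar)
      obtain ⟨h1, h2⟩ := coeff_zero hPy' hPnp hvec
      rw [sub_eq_zero] at h1 h2
      rw [← h1, ← h2]
  -- global scalar
  obtain ⟨κ, hκ0, hκ⟩ := exist v2 v2 hv2 hv2
  refine ⟨κ • Q, P, ?_, hPinj, fun x y => ?_⟩
  · intro u w huw
    simp only [LinearMap.smul_apply] at huw
    exact hQinj (smul_right_injective V hκ0 huw)
  · by_cases hx : x = 0
    · rw [hx, zero_tmul, map_zero, map_zero, zero_tmul]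
    by_cases hy : y = 0
    · rw [hy, tmul_zero, map_zero, map_zero, tmul_zero]
    obtain ⟨c, hc0, hc⟩ := exist x y hx hy
    obtain ⟨c2, hc20, hc2⟩ := exist v2 y hv2 hy
    have e1 : c = c2 := samec_x x v2 y hx hv2 hy c c2 hc hc2
    have e2 : c2 = κ := samec_y v2 y v2 hv2 hy hv2 c2 κ hc2 hκ
    rw [hc, e1, e2, LinearMap.smul_apply, smul_tmul']
end YY5
section FINAL

/-- An invertible linear map on `ℂ^d ⊗ ℂ^d` sending product vectors to product
vectors is `Y₁ ⊗ Y₂` or `swap ∘ (Y₁ ⊗ Y₂)` for invertible `Y₁, Y₂`. -/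
theorem stmt2 (d : ℕ)
    (Y : TensorProduct ℂ (Fin d → ℂ) (Fin d → ℂ) ≃ₗ[ℂ]
         TensorProduct ℂ (Fin d → ℂ) (Fin d → ℂ))
    (hY : ∀ x y : Fin d → ℂ, ∃ a b : Fin d → ℂ, Y (x ⊗ₜ y) = a ⊗ₜ b) :
    ∃ (Y₁ Y₂ : (Fin d → ℂ) ≃ₗ[ℂ] (Fin d → ℂ)),
      (Y : TensorProduct ℂ (Fin d → ℂ) (Fin d → ℂ) →ₗ[ℂ]
           TensorProduct ℂ (Fin d → ℂ) (Fin d → ℂ))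
        = TensorProduct.map Y₁.toLinearMap Y₂.toLinearMap
      ∨ (Y : TensorProduct ℂ (Fin d → ℂ) (Fin d → ℂ) →ₗ[ℂ]
           TensorProduct ℂ (Fin d → ℂ) (Fin d → ℂ))
        = (TensorProduct.comm ℂ (Fin d → ℂ) (Fin d → ℂ)).toLinearMap ∘ₗ
            TensorProduct.map Y₁.toLinearMap Y₂.toLinearMap := by
  classical
  by_cases hd0 : d = 0
  · subst hd0
    refine ⟨LinearEquiv.refl ℂ _, LinearEquiv.refl ℂ _, Or.inl ?_⟩
    have hz : ∀ z : TensorProduct ℂ (Fin 0 → ℂ) (Fin 0 → ℂ), z = 0 := by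
      intro z
      induction z using TensorProduct.induction_on with
      | zero => rfl
      | tmul a b => rw [Subsingleton.elim a 0, zero_tmul]
      | add u v hu hv => rw [hu, hv, add_zero]
    refine LinearMap.ext fun z => ?_
    rw [hz z, map_zero, map_zero]
  by_cases hd1 : d = 1
  · subst hd1
    set e0 : Fin 1 → ℂ := fun _ => 1 with he0
    have he0nz : e0 ≠ 0 := by
      intro h
      have := congrFun h 0
      simp [he0] at this
    have hsingle : ∀ x : Fin 1 → ℂ, x = x 0 • e0 := by
      intro x; funext i
      have : i = 0 := Subsingleton.elim _ _
      simp [this, he0]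
    obtain ⟨a, b, hab⟩ := hY e0 e0
    have hz0 : e0 ⊗ₜ[ℂ] e0 ≠ 0 := nz_tmul he0nz he0nz
    have hY0 : Y (e0 ⊗ₜ e0) = (a 0 * b 0) • (e0 ⊗ₜ[ℂ] e0) := by
      rw [hab]
      conv_lhs => rw [hsingle a, hsingle b]
      rw [tmul_smul, ← smul_tmul', smul_smul, mul_comm]
    have hc0 : a 0 * b 0 ≠ 0 := by
      intro h
      have : Y (e0 ⊗ₜ[ℂ] e0) = 0 := by rw [hY0, h, zero_smul]
      rw [LinearEquiv.map_eq_zero_iff] at this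
      exact hz0 this
    refine ⟨LinearEquiv.smulOfNeZero ℂ _ _ hc0, LinearEquiv.refl ℂ _, Or.inl ?_⟩
    apply TensorProduct.ext'
    intro x y
    have hxy : (x ⊗ₜ[ℂ] y : TensorProduct ℂ (Fin 1 → ℂ) (Fin 1 → ℂ))
        = (x 0 * y 0) • (e0 ⊗ₜ[ℂ] e0) := by
      conv_lhs => rw [hsingle x, hsingle y]
      rw [tmul_smul, ← smul_tmul', smul_smul, mul_comm]
    rw [LinearEquiv.coe_coe, hxy, map_smul, map_smul, hY0, TensorProduct.map_tmul]
    simp only [LinearEquiv.coe_toLinearMap, LinearEquiv.smulOfNeZero_apply,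
      LinearEquiv.refl_apply]
    simp [Units.smul_def, smul_tmul']
  -- now d ≥ 2
  have hd2 : 2 ≤ d := by omega
  obtain ⟨v2, v1, hv2, hnp12⟩ :
      ∃ v2 v1 : Fin d → ℂ, v2 ≠ 0 ∧ v1 ∉ Submodule.span ℂ {v2} := by
    refine ⟨Pi.single ⟨0, by omega⟩ 1, Pi.single ⟨1, by omega⟩ 1, ?_, ?_⟩
    · intro h
      have h0 := congrFun h ⟨0, by omega⟩
      rw [Pi.single_eq_same, Pi.zero_apply] at h0
      exact one_ne_zero h0
    · intro hmem
      obtain ⟨t, ht⟩ := Submodule.mem_span_singleton.mp hmem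
      have h1 := congrFun ht ⟨1, by omega⟩
      have hne : (⟨1, by omega⟩ : Fin d) ≠ ⟨0, by omega⟩ := by simp [Fin.ext_iff]
      rw [Pi.smul_apply, Pi.single_eq_of_ne hne, Pi.single_eq_same, smul_zero] at h1
      exact one_ne_zero h1.symm
  have mkequiv : ∀ (Q : (Fin d → ℂ) →ₗ[ℂ] (Fin d → ℂ)), Function.Injective Q →
      ∃ Qe : (Fin d → ℂ) ≃ₗ[ℂ] (Fin d → ℂ), Qe.toLinearMap = Q := by
    intro Q hQ
    exact ⟨LinearEquiv.ofBijective Q ⟨hQ, (LinearMap.injective_iff_surjective).mp hQ⟩, rfl⟩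
  rcases slice_LR Y hY hv2 v2 hv2 with hL | hR
  · have hall : ∀ x : Fin d → ℂ, x ≠ 0 → Ltype Y x :=
      fun x hx => sametype Y hv2 hnp12 hY hv2 hx hL
    obtain ⟨Q, P, hQinj, hPinj, h⟩ := mainL Y hv2 hnp12 hY hall
    obtain ⟨Qe, hQe⟩ := mkequiv Q hQinj
    obtain ⟨Pe, hPe⟩ := mkequiv P hPinj
    refine ⟨Qe, Pe, Or.inl ?_⟩
    apply TensorProduct.ext'
    intro x y
    rw [LinearEquiv.coe_coe, h, TensorProduct.map_tmul, hQe, hPe]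
  · set S : TensorProduct ℂ (Fin d → ℂ) (Fin d → ℂ) ≃ₗ[ℂ] TensorProduct ℂ (Fin d → ℂ) (Fin d → ℂ) :=
      Y.trans (TensorProduct.comm ℂ (Fin d → ℂ) (Fin d → ℂ)) with hS
    have hSY : ∀ x y : Fin d → ℂ, ∃ a b : Fin d → ℂ, S (x ⊗ₜ y) = a ⊗ₜ b := by
      intro x y
      obtain ⟨a, b, hab⟩ := hY x y
      exact ⟨b, a, by rw [hS, LinearEquiv.trans_apply, hab, TensorProduct.comm_tmul]⟩
    have hLS : Ltype S v2 := by
      obtain ⟨b, hb, hRb⟩ := hR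
      refine ⟨b, hb, fun v => ?_⟩
      obtain ⟨p, hp⟩ := hRb v
      exact ⟨p, by rw [hS, LinearEquiv.trans_apply, hp, TensorProduct.comm_tmul]⟩
    have hall : ∀ x : Fin d → ℂ, x ≠ 0 → Ltype S x :=
      fun x hx => sametype S hv2 hnp12 hSY hv2 hx hLS
    obtain ⟨Q, P, hQinj, hPinj, h⟩ := mainL S hv2 hnp12 hSY hall
    obtain ⟨Qe, hQe⟩ := mkequiv Q hQinj
    obtain ⟨Pe, hPe⟩ := mkequiv P hPinj
    refine ⟨Qe, Pe, Or.inr ?_⟩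
    apply TensorProduct.ext'
    intro x y
    have h2 : (TensorProduct.comm ℂ (Fin d → ℂ) (Fin d → ℂ)) (Y (x ⊗ₜ y)) = Q x ⊗ₜ P y := by
      rw [← LinearEquiv.trans_apply, ← hS, h]
    have h3 := congrArg (TensorProduct.comm ℂ (Fin d → ℂ) (Fin d → ℂ)).symm h2
    rw [LinearEquiv.symm_apply_apply, TensorProduct.comm_symm_tmul] at h3
    rw [LinearEquiv.coe_coe, h3, LinearMap.comp_apply, TensorProduct.map_tmul,
      LinearEquiv.coe_coe, TensorProduct.comm_tmul, hQe, hPe]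
end FINAL
end

section
/- Let Y be an invertible linear map on ℂ^d ⊗ ℂ^d with a fixed product basis |i,j⟩, such that Y(|i,1⟩) = |α_i⟩ ⊗ |β_1⟩ for all i, Y(|1,j⟩) = |α_1⟩ ⊗ |β_j⟩ for all j, and Y maps all vectors |i,j⟩ + |i,1⟩ and |i,j⟩ + |1,j⟩ to product vectors, with Y(|i,j⟩) = c_{ij} |α_i⟩ ⊗ |β_j⟩ for scalars c_{ij}. If Y(Σ_{i,j} |i,j⟩) is a product vector, then the matrix (c_{ij}) has rank one, i.e., c_{ij} = r_i s_j for some scalars r_i, s_j. -/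
open TensorProduct Finset

/-- If `Y (e_i ⊗ e_j) = c_{ij} α_i ⊗ β_j` with `α, β` linearly independent and
`Y` maps the uniform vector `Σ e_i ⊗ e_j` to a product vector, then the matrix
`(c_{ij})` has rank one: `c_{ij} = r_i s_j`. -/
theorem stmt3 (d : ℕ)
    (Y : TensorProduct ℂ (Fin d → ℂ) (Fin d → ℂ) ≃ₗ[ℂ]
         TensorProduct ℂ (Fin d → ℂ) (Fin d → ℂ))
    (α β : Fin d → (Fin d → ℂ))
    (hα : LinearIndependent ℂ α) (hβ : LinearIndependent ℂ β)
    (c : Fin d → Fin d → ℂ)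
    (hY : ∀ i j : Fin d,
      Y ((Pi.single i (1 : ℂ)) ⊗ₜ (Pi.single j (1 : ℂ)))
        = c i j • (α i ⊗ₜ β j))
    (hprod : ∃ x y : Fin d → ℂ,
      Y (∑ i : Fin d, ∑ j : Fin d,
          (Pi.single i (1 : ℂ)) ⊗ₜ (Pi.single j (1 : ℂ))) = x ⊗ₜ y) :
    ∃ r s : Fin d → ℂ, ∀ i j, c i j = r i * s j := by
  obtain ⟨x, y, hxy⟩ := hprod
  rcases Nat.eq_zero_or_pos d with hd | hd
  · subst hd
    exact ⟨0, 0, fun i => i.elim0⟩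
  haveI : Nonempty (Fin d) := ⟨⟨0, hd⟩⟩
  have hcard : Fintype.card (Fin d) = Module.finrank ℂ (Fin d → ℂ) := by
    simp [Module.finrank_fintype_fun_eq_card]
  let Bα := basisOfLinearIndependentOfCardEqFinrank hα hcard
  let Bβ := basisOfLinearIndependentOfCardEqFinrank hβ hcard
  let B := Bα.tensorProduct Bβ
  have hsum : (∑ p : Fin d × Fin d, (c p.1 p.2) • B p) = x ⊗ₜ y := by
    rw [← hxy, map_sum]
    rw [Fintype.sum_prod_type]
    refine Finset.sum_congr rfl fun i _ => ?_
    rw [map_sum]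
    refine Finset.sum_congr rfl fun j _ => ?_
    rw [hY i j]
    simp [B, Module.Basis.tensorProduct_apply, Bα, Bβ,
      coe_basisOfLinearIndependentOfCardEqFinrank]
  have hrepr : B.repr (x ⊗ₜ y) = (fun p : Fin d × Fin d => c p.1 p.2) := by
    rw [← hsum, B.repr_sum_self]
  refine ⟨Bα.repr x, Bβ.repr y, fun i j => ?_⟩
  have h1 : B.repr (x ⊗ₜ y) (i, j) = Bα.repr x i * Bβ.repr y j := by
    rw [Module.Basis.tensorProduct_repr_tmul_apply, smul_eq_mul, mul_comm]
  have h2 : (B.repr (x ⊗ₜ y) : (Fin d × Fin d) → ℂ) (i, j) = c i j := by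
    rw [hrepr]
  rw [← h1, h2]
end

section
/- Let d ≥ 2 and suppose that for each i ∈ {1,...,d} we have nonzero vectors α_i, β_i ∈ ℂ^d such that for every pair i ≠ j the vector α_i ⊗ β_i + α_j ⊗ β_j is a simple tensor. Suppose moreover the vectors α_i ⊗ β_i are linearly independent. Then either all α_i are pairwise proportional, or all β_i are pairwise proportional, or there is no triple i₀, i₁, i₂ of distinct indices with α_{i₀} not proportional to α_{i₁} and β_{i₁} not proportional to β_{i₂}; in particular (for d ≥ 3) either α_i ∝ α_j for all i,j or β_i ∝ β_j for all i,j. -/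
open TensorProduct

private lemma exists_dual_pair {K V : Type*} [Field K] [AddCommGroup V] [Module K V]
    {v w : V} (h : v ∉ Submodule.span K {w}) :
    ∃ f : V →ₗ[K] K, f v = 1 ∧ f w = 0 := by
  set p : Submodule K V := Submodule.span K {w}
  rcases (LinearPMap.supSpanSingleton ⟨p, 0⟩ v (1 : K) h).toFun.exists_extend with ⟨f, hf⟩
  refine ⟨f, ?_, ?_⟩
  · have := LinearPMap.supSpanSingleton_apply_mk (⟨p, 0⟩ : V →ₗ.[K] K) v (1 : K) h 0 p.zero_mem 1
    have h2 := (LinearMap.congr_fun hf _).trans this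
    simp at h2
    exact h2
  · have := LinearPMap.supSpanSingleton_apply_mk (⟨p, 0⟩ : V →ₗ.[K] K) v (1 : K) h w
      (Submodule.mem_span_singleton_self w) 0
    have h2 := (LinearMap.congr_fun hf _).trans this
    simp at h2
    exact h2

private lemma key {d : ℕ} (x₁ y₁ x₂ y₂ x y : Fin d → ℂ)
    (hx₁ : x₁ ≠ 0) (hx₂ : x₂ ≠ 0) (hy₁ : y₁ ≠ 0) (hy₂ : y₂ ≠ 0)
    (h : x₁ ⊗ₜ[ℂ] y₁ + x₂ ⊗ₜ[ℂ] y₂ = x ⊗ₜ[ℂ] y)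
    (hx : ¬ ∃ c : ℂ, c ≠ 0 ∧ x₁ = c • x₂) :
    ∃ c : ℂ, c ≠ 0 ∧ y₁ = c • y₂ := by
  have h1 : x₁ ∉ Submodule.span ℂ {x₂} := by
    intro hmem
    rcases Submodule.mem_span_singleton.mp hmem with ⟨c, hc⟩
    rcases eq_or_ne c 0 with rfl | hc0
    · exact hx₁ (by simpa using hc.symm)
    · exact hx ⟨c, hc0, hc.symm⟩
  have h2 : x₂ ∉ Submodule.span ℂ {x₁} := by
    intro hmem
    rcases Submodule.mem_span_singleton.mp hmem with ⟨c, hc⟩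
    rcases eq_or_ne c 0 with rfl | hc0
    · exact hx₂ (by simpa using hc.symm)
    · exact hx ⟨c⁻¹, inv_ne_zero hc0, by rw [← hc, smul_smul, inv_mul_cancel₀ hc0, one_smul]⟩
  obtain ⟨f, hf1, hf2⟩ := exists_dual_pair h1
  obtain ⟨g, hg2, hg1⟩ := exists_dual_pair h2
  -- L φ : applies φ to the left factor
  let L : ((Fin d → ℂ) →ₗ[ℂ] ℂ) → ((Fin d → ℂ) ⊗[ℂ] (Fin d → ℂ)) →ₗ[ℂ] (Fin d → ℂ) :=
    fun φ => TensorProduct.lift ((LinearMap.lsmul ℂ (Fin d → ℂ)).comp φ)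
  have hLf := congrArg (L f) h
  have hLg := congrArg (L g) h
  simp only [L, map_add, TensorProduct.lift.tmul, LinearMap.comp_apply,
    LinearMap.lsmul_apply, hf1, hf2, hg1, hg2, one_smul, zero_smul,
    add_zero, zero_add] at hLf hLg
  -- hLf : y₁ = f x • y, hLg : y₂ = g x • y
  have hfx : f x ≠ 0 := by
    intro h0; rw [h0, zero_smul] at hLf; exact hy₁ hLf
  have hgx : g x ≠ 0 := by
    intro h0; rw [h0, zero_smul] at hLg; exact hy₂ hLg
  refine ⟨f x * (g x)⁻¹, mul_ne_zero hfx (inv_ne_zero hgx), ?_⟩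
  rw [hLf, hLg, smul_smul, mul_assoc, inv_mul_cancel₀ hgx, mul_one]

/-- Pairwise-sum-is-product structure for families of simple tensors. -/
theorem stmt9 (d : ℕ) (hd : 2 ≤ d) (α β : Fin d → (Fin d → ℂ))
    (hα0 : ∀ i, α i ≠ 0) (hβ0 : ∀ i, β i ≠ 0)
    (hli : LinearIndependent ℂ (fun i => (α i) ⊗ₜ[ℂ] (β i)))
    (hsum : ∀ i j : Fin d, i ≠ j →
      ∃ x y : Fin d → ℂ, (α i) ⊗ₜ[ℂ] (β i) + (α j) ⊗ₜ[ℂ] (β j) = x ⊗ₜ y) :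
    (∀ i j : Fin d, ∃ c : ℂ, c ≠ 0 ∧ α i = c • α j)
    ∨ (∀ i j : Fin d, ∃ c : ℂ, c ≠ 0 ∧ β i = c • β j)
    ∨ ¬ ∃ i₀ i₁ i₂ : Fin d, i₀ ≠ i₁ ∧ i₁ ≠ i₂ ∧ i₀ ≠ i₂
        ∧ (¬ ∃ c : ℂ, c ≠ 0 ∧ α i₀ = c • α i₁)
        ∧ (¬ ∃ c : ℂ, c ≠ 0 ∧ β i₁ = c • β i₂) := by
  -- pairwise dichotomy
  have pair : ∀ i j : Fin d, i ≠ j →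
      (∃ c : ℂ, c ≠ 0 ∧ α i = c • α j) ∨ (∃ c : ℂ, c ≠ 0 ∧ β i = c • β j) := by
    intro i j hij
    by_cases hA : ∃ c : ℂ, c ≠ 0 ∧ α i = c • α j
    · exact Or.inl hA
    · obtain ⟨x, y, hxy⟩ := hsum i j hij
      exact Or.inr (key (α i) (β i) (α j) (β j) x y (hα0 i) (hα0 j) (hβ0 i) (hβ0 j) hxy hA)
  refine Or.inr (Or.inr ?_)
  rintro ⟨i₀, i₁, i₂, h01, h12, h02, hA, hB⟩
  obtain ⟨c, hc0, hc⟩ := (pair i₀ i₁ h01).resolve_left hA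
  obtain ⟨c', hc'0, hc'⟩ := (pair i₁ i₂ h12).resolve_right hB
  rcases pair i₀ i₂ h02 with ⟨e, he0, he⟩ | ⟨e, he0, he⟩
  · exact hA ⟨e * c'⁻¹, mul_ne_zero he0 (inv_ne_zero hc'0), by
      rw [he, hc', smul_smul, mul_assoc, inv_mul_cancel₀ hc'0, mul_one]⟩
  · exact hB ⟨c⁻¹ * e, mul_ne_zero (inv_ne_zero hc0) he0, by
      rw [← smul_smul, ← he, hc, smul_smul, inv_mul_cancel₀ hc0, one_smul]⟩
end

section
/- Let J ∈ (1/2)ℤ, J ≥ 0, and let θ be a real number. Suppose that for all sufficiently large natural numbers R and S (say R, S ≥ R₀), there exist integers k₁,...,k_{RS}, each lying in {−J, −J+1, ..., J−1, J} (shifted by J these are among 0,...,2J), such that k₁ + ... + k_{RS} = R·S·θ. Then θ − J is an integer. -/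
open Finset

/-- Generalized Lieb–Schultz–Mattis arithmetic: if for all large `R, S` the
number `R·S·θ` is a sum of `R·S` elements of `{-J, -J+1, …, J}` (with
`J ∈ (1/2)ℤ`, `J ≥ 0`), then `θ - J` is an integer. -/
theorem stmt11 (J θ : ℝ) (hJ : 0 ≤ J) (h2J : ∃ m : ℤ, 2 * J = (m : ℝ))
    (R₀ : ℕ)
    (h : ∀ R S : ℕ, R₀ ≤ R → R₀ ≤ S →
      ∃ k : Fin (R * S) → ℝ,
        (∀ r, ∃ t : ℕ, (t : ℝ) ≤ 2 * J ∧ k r = -J + t) ∧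
        ∑ r, k r = (R : ℝ) * S * θ) :
    ∃ z : ℤ, θ - J = (z : ℝ) := by
  obtain ⟨m, hm⟩ := h2J
  have key : ∀ R S : ℕ, R₀ ≤ R → R₀ ≤ S → ∃ T : ℤ, (R : ℝ) * S * (θ + J) = T := by
    intro R S hR hS
    obtain ⟨k, hk, hsum⟩ := h R S hR hS
    choose t ht hkt using hk
    refine ⟨∑ r, (t r : ℤ), ?_⟩
    have e : ∑ r, k r = ∑ r : Fin (R * S), (-J + t r) :=
      Finset.sum_congr rfl fun r _ => hkt r
    rw [e, Finset.sum_add_distrib] at hsum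
    simp only [Finset.sum_const, Finset.card_univ, Fintype.card_fin,
      nsmul_eq_mul] at hsum
    push_cast
    push_cast at hsum
    linarith
  set N := max R₀ 1 with hN
  have h1 : R₀ ≤ N := le_max_left _ _
  have h2 : R₀ ≤ N + 1 := le_trans h1 (Nat.le_succ N)
  obtain ⟨a, ha⟩ := key N N h1 h1
  obtain ⟨b, hb⟩ := key N (N + 1) h1 h2
  obtain ⟨c, hc⟩ := key (N + 1) (N + 1) h2 h2
  refine ⟨c - 2 * b + a - m, ?_⟩
  push_cast
  push_cast at ha hb hc
  nlinarith [ha, hb, hc, hm]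
end
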